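/- Let M = { A ∈ M₂(ℂ) : det(Im A) > 0 }, parametrizing 2-dimensional complex tori X_A = ℂ²/Λ_A with Λ_A generated by (1,0), (0,1), and the columns A₁, A₂ of A. Suppose A ∈ M is 'generic' in the sense that the complex numbers 1 together with the four entries of A, their pairwise products, and their squares are linearly independent over ℚ. Then every ℂ-linear map L : ℂ² → ℂ² with L(Λ_A) = Λ_A satisfies L = ±Id. Hence the automorphism group of the torus X_A is generated by translations and -Id. -/
import Mathlib


/-- for a generic `A ∈ M₂(ℂ)` with `det(Im A) > 0` (entries, their
pairwise products and squares, together with `1`, being ℚ-linearly independent), every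
ℂ-linear map of `ℂ²` preserving the lattice `Λ_A = ⟨e₁, e₂, A₁, A₂⟩` is `±Id`. -/
theorem stmt_16 (A : Matrix (Fin 2) (Fin 2) ℂ)
    (hdet : (0 : ℝ) < (Matrix.of fun i j => (A i j).im).det)
    (hgen : LinearIndependent ℚ
      ![(1 : ℂ), A 0 0, A 0 1, A 1 0, A 1 1,
        A 0 0 * A 0 1, A 0 0 * A 1 0, A 0 0 * A 1 1,
        A 0 1 * A 1 0, A 0 1 * A 1 1, A 1 0 * A 1 1,
        A 0 0 ^ 2, A 0 1 ^ 2, A 1 0 ^ 2, A 1 1 ^ 2])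
    (Λ : Set (Fin 2 → ℂ))
    (hΛ : Λ = {v | ∃ p q r s : ℤ, v = p • ![(1 : ℂ), 0] + q • ![(0 : ℂ), 1] +
        r • (fun i => A i 0) + s • (fun i => A i 1)})
    (L : (Fin 2 → ℂ) →ₗ[ℂ] (Fin 2 → ℂ)) (hL : L '' Λ = Λ) :
    L = LinearMap.id ∨ L = -LinearMap.id := by
  have H := Fintype.linearIndependent_iff.mp hgen
  have hsub : ∀ v ∈ Λ, L v ∈ Λ := by
    intro v hv; rw [← hL]; exact ⟨v, hv, rfl⟩
  have he1m : (![(1:ℂ),0] : Fin 2 → ℂ) ∈ Λ := by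
    rw [hΛ]; exact ⟨1,0,0,0, by funext i; fin_cases i <;> simp⟩
  have he2m : (![(0:ℂ),1] : Fin 2 → ℂ) ∈ Λ := by
    rw [hΛ]; exact ⟨0,1,0,0, by funext i; fin_cases i <;> simp⟩
  have hA1m : (fun i => A i 0) ∈ Λ := by
    rw [hΛ]; exact ⟨0,0,1,0, by funext i; fin_cases i <;> simp⟩
  have t1 := hsub _ he1m; rw [hΛ] at t1
  obtain ⟨a,b,c,d, he1⟩ := t1
  have t2 := hsub _ he2m; rw [hΛ] at t2
  obtain ⟨a2,b2,c2,d2, he2⟩ := t2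
  have t3 := hsub _ hA1m; rw [hΛ] at t3
  obtain ⟨p,q,r,s, hA1⟩ := t3
  -- express column 1 of A in terms of e1, e2
  have hcol : (fun i => A i 0) = A 0 0 • ![(1:ℂ),0] + A 1 0 • ![(0:ℂ),1] := by
    funext i; fin_cases i <;> simp
  have hLA1 : (A 0 0 • L ![(1:ℂ),0] + A 1 0 • L ![(0:ℂ),1]) =
      p • ![(1 : ℂ), 0] + q • ![(0 : ℂ), 1] + r • (fun i => A i 0) + s • (fun i => A i 1) := by
    rw [← map_smul, ← map_smul, ← map_add, ← hcol]; exact hA1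
  have E0 := congrFun hLA1 0
  have E1 := congrFun hLA1 1
  rw [he1, he2] at E0 E1
  simp only [Pi.add_apply, Pi.smul_apply, Pi.mul_apply, Pi.intCast_apply, smul_eq_mul,
    zsmul_eq_mul, Matrix.cons_val_zero, Matrix.cons_val_one, Matrix.head_cons, mul_zero,
    mul_one, add_zero, zero_add] at E0 E1
  have h1 := H ![(-p : ℚ), a - r, -s, a2, 0, d, c2, 0, d2, 0, 0, c, 0, 0, 0] (by
    simp only [Fin.sum_univ_succ, Fin.sum_univ_zero, Matrix.cons_val_zero,
      Matrix.cons_val_one, Matrix.head_cons, Matrix.cons_val_succ, Rat.smul_def, add_zero]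
    push_cast
    linear_combination E0)
  have h2 := H ![(-q : ℚ), b, 0, b2 - r, -s, 0, c, d, 0, 0, d2, 0, 0, c2, 0] (by
    simp only [Fin.sum_univ_succ, Fin.sum_univ_zero, Matrix.cons_val_zero,
      Matrix.cons_val_one, Matrix.head_cons, Matrix.cons_val_succ, Rat.smul_def, add_zero]
    push_cast
    linear_combination E1)
  have har : a = r := by have := h1 1; simp at this; exact_mod_cast sub_eq_zero.mp (by exact_mod_cast this)
  have ha2 : a2 = 0 := by have := h1 3; simp at this; exact_mod_cast this
  have hd : d = 0 := by
    have := h1 5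
    simp only [show (5 : Fin 15) = (0 : Fin 10).succ.succ.succ.succ.succ from rfl,
      Matrix.cons_val_succ, Matrix.cons_val_zero] at this
    exact_mod_cast this
  have hc2 : c2 = 0 := by
    have := h1 6
    simp only [show (6 : Fin 15) = (0 : Fin 9).succ.succ.succ.succ.succ.succ from rfl,
      Matrix.cons_val_succ, Matrix.cons_val_zero] at this
    exact_mod_cast this
  have hd2 : d2 = 0 := by
    have := h1 8
    simp only [show (8 : Fin 15) =
        (0 : Fin 7).succ.succ.succ.succ.succ.succ.succ.succ from rfl,
      Matrix.cons_val_succ, Matrix.cons_val_zero] at this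
    exact_mod_cast this
  have hc : c = 0 := by
    have := h1 11
    simp only [show (11 : Fin 15) =
        (0 : Fin 4).succ.succ.succ.succ.succ.succ.succ.succ.succ.succ.succ from rfl,
      Matrix.cons_val_succ, Matrix.cons_val_zero] at this
    exact_mod_cast this
  have hb : b = 0 := by have := h2 1; simp at this; exact_mod_cast this
  have hb2r : b2 = r := by have := h2 3; simp at this; exact_mod_cast sub_eq_zero.mp (by exact_mod_cast this)
  have he1' : L ![(1:ℂ),0] = (a:ℂ) • ![(1:ℂ),0] := by
    rw [he1, hb, hc, hd, Int.cast_smul_eq_zsmul]; simp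
  have he2' : L ![(0:ℂ),1] = (a:ℂ) • ![(0:ℂ),1] := by
    rw [he2, ha2, hb2r, ← har, hc2, hd2, Int.cast_smul_eq_zsmul]; simp
  have key : ∀ w : Fin 2 → ℂ, L w = (a:ℂ) • w := by
    intro w
    have hw : w = w 0 • ![(1:ℂ),0] + w 1 • ![(0:ℂ),1] := by
      funext i; fin_cases i <;> simp
    rw [hw, map_add, map_smul, map_smul, he1', he2',
      smul_comm (w 0), smul_comm (w 1), ← smul_add]
  -- surjectivity: e1 is in the image
  have hsurj : (![(1:ℂ),0] : Fin 2 → ℂ) ∈ ⇑L '' Λ := by rw [hL]; exact he1m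
  obtain ⟨v, hvΛ, hvL⟩ := hsurj
  rw [hΛ] at hvΛ
  obtain ⟨p0, q0, r0, s0, hv⟩ := hvΛ
  rw [key v, hv] at hvL
  have E2 := congrFun hvL 0
  simp only [Pi.add_apply, Pi.smul_apply, Pi.mul_apply, Pi.intCast_apply, smul_eq_mul,
    zsmul_eq_mul, Matrix.cons_val_zero, Matrix.cons_val_one, Matrix.head_cons, mul_zero,
    mul_one, add_zero, zero_add] at E2
  have h3 := H ![((a:ℚ) * p0 - 1 : ℚ), a * r0, a * s0, 0, 0, 0, 0, 0, 0, 0, 0, 0, 0, 0, 0] (by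
    simp only [Fin.sum_univ_succ, Fin.sum_univ_zero, Matrix.cons_val_zero,
      Matrix.cons_val_one, Matrix.head_cons, Matrix.cons_val_succ, Rat.smul_def, add_zero]
    push_cast
    linear_combination E2)
  have hap : a * p0 = 1 := by
    have := h3 0; simp at this
    exact_mod_cast sub_eq_zero.mp (by exact_mod_cast this)
  rcases Int.eq_one_or_neg_one_of_mul_eq_one hap with h | h
  · left
    refine LinearMap.ext fun w => ?_
    rw [key w, h]; simp
  · right
    refine LinearMap.ext fun w => ?_
    rw [key w, h]; simp
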